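/- arXiv:1410.5097 — 3 statements merged into one kernel-verified Lean document; each statement's English description precedes it below -/
import Mathlib

section
/- Let f : ℝ → ℝ be three times continuously differentiable on an open interval D, let x* ∈ D be a simple zero of f, and define c₂ = f''(x*)/(2 f'(x*)). For x near x* with e = x - x*, set y = x - f(x)/f'(x) and t(x) = f(y)/f(x). Then t(x)/e → c₂ as e → 0. -/
/-!
Write `s = dslope f x₀`, so that `f z = (z - x₀) * s z`, and `e = x - x₀`. The Newton step `y`
satisfies `y - x₀ = (e * f' x - f x) / f' x`, hence
`t / e = s y / s x * ((e * f' x - f x) / e ^ 2) / f' x`.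
As `x → x₀`, both `s y` and `s x` tend to `f' x₀`, and by L'Hôpital's rule (the numerator has
derivative `e * f'' x`, the denominator `2 * e`) the middle factor tends to `f'' x₀ / 2`.
-/

open Filter Topology

theorem tendsto_sub_mul_deriv_sub_div_sq {f : ℝ → ℝ} {a : ℝ}
    (hf : ∀ᶠ x in 𝓝 a, DifferentiableAt ℝ f x) (hf' : ∀ᶠ x in 𝓝 a, DifferentiableAt ℝ (deriv f) x)
    (hf'' : ContinuousAt (deriv (deriv f)) a) :
    Tendsto (fun x => ((x - a) * deriv f x - (f x - f a)) / (x - a) ^ 2) (𝓝[≠] a)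
      (𝓝 (deriv (deriv f) a / 2)) := by
  have hcont : ContinuousAt f a := hf.self_of_nhds.continuousAt
  have hcont' : ContinuousAt (deriv f) a := hf'.self_of_nhds.continuousAt
  have hne : ∀ᶠ x in 𝓝[≠] a, x - a ≠ 0 := eventually_nhdsWithin_of_forall fun x => sub_ne_zero.2
  refine HasDerivAt.lhopital_zero_nhdsNE (f' := fun x => (x - a) * deriv (deriv f) x)
    (g' := fun x => 2 * (x - a)) ?_ (.of_forall fun x => ?_) ?_ ?_ ?_ ?_
  · filter_upwards [eventually_nhdsWithin_of_eventually_nhds (hf.and hf')] with x ⟨hx, hx'⟩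
    exact ((((hasDerivAt_id' x).sub_const a).fun_mul hx'.hasDerivAt).sub
      (hx.hasDerivAt.sub_const (f a))).congr_deriv (by ring)
  · exact (((hasDerivAt_id' x).sub_const a).fun_pow 2).congr_deriv (by ring)
  · filter_upwards [hne] with x hx using mul_ne_zero two_ne_zero hx
  · have := ((tendsto_id.sub_const a).mul hcont'.tendsto).sub (hcont.tendsto.sub_const (f a))
    simpa using this.mono_left nhdsWithin_le_nhds
  · exact ((continuous_sub_right a).pow 2).tendsto' a 0 (by simp) |>.mono_left nhdsWithin_le_nhds
  · refine (hf''.tendsto.div_const 2).mono_left nhdsWithin_le_nhds |>.congr' ?_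
    filter_upwards [hne] with x hx
    field_simp

theorem newton_quotient_eq_dslope_div_mul {f : ℝ → ℝ} {a x d : ℝ} (ha : f a = 0) (hx : x ≠ a)
    (hd : d ≠ 0) :
    f (x - f x / d) / f x / (x - a) =
      dslope f a (x - f x / d) / dslope f a x * (((x - a) * d - f x) / (x - a) ^ 2) / d := by
  have hfx := sub_smul_dslope f a x
  have hfy := sub_smul_dslope f a (x - f x / d)
  simp only [smul_eq_mul, ha, sub_zero] at hfx hfy
  rw [← hfy, ← hfx]
  generalize dslope f a x = s
  have he : x - a ≠ 0 := sub_ne_zero.2 hx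
  rcases eq_or_ne s 0 with rfl | hs
  · -- then `f x = 0`, and both sides are the junk value `0`
    simp
  · field_simp
    ring

theorem stmt12_general (D : Set ℝ) (hD : IsOpen D)
    (f : ℝ → ℝ) (hf : ContDiffOn ℝ 3 f D)
    (x₀ : ℝ) (hx₀ : x₀ ∈ D) (hroot : f x₀ = 0) (hder : deriv f x₀ ≠ 0) :
    Filter.Tendsto
      (fun x : ℝ => (f (x - f x / deriv f x) / f x) / (x - x₀))
      (nhdsWithin x₀ {x₀}ᶜ)
      (nhds (iteratedDeriv 2 f x₀ / (2 * deriv f x₀))) := by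
  have hf' : ContDiffOn ℝ 2 (deriv f) D := hf.deriv_of_isOpen hD (by norm_num)
  have hf'' : ContDiffOn ℝ 1 (deriv (deriv f)) D := hf'.deriv_of_isOpen hD (by norm_num)
  have hdiff : ∀ᶠ x in 𝓝 x₀, DifferentiableAt ℝ f x := hD.eventually_mem hx₀ |>.mono fun x hx =>
    (hf.differentiableOn (by norm_num)).differentiableAt (hD.mem_nhds hx)
  have hdiff' : ∀ᶠ x in 𝓝 x₀, DifferentiableAt ℝ (deriv f) x := hD.eventually_mem hx₀ |>.mono
    fun x hx => (hf'.differentiableOn (by norm_num)).differentiableAt (hD.mem_nhds hx)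
  have hslope : Tendsto (dslope f x₀) (𝓝 x₀) (𝓝 (deriv f x₀)) := by
    simpa using (continuousAt_dslope_same.2 hdiff.self_of_nhds).tendsto
  have hderiv : Tendsto (deriv f) (𝓝 x₀) (𝓝 (deriv f x₀)) := hdiff'.self_of_nhds.continuousAt
  have hnewton : Tendsto (fun x => x - f x / deriv f x) (𝓝 x₀) (𝓝 x₀) := by
    simpa [hroot] using tendsto_id.sub (hdiff.self_of_nhds.continuousAt.tendsto.div hderiv hder)
  have hquad := tendsto_sub_mul_deriv_sub_div_sq hdiff hdiff'
    (hf''.continuousOn.continuousAt (hD.mem_nhds hx₀))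
  simp only [hroot, sub_zero] at hquad
  have hlim := (((hslope.comp hnewton).div hslope hder).mono_left nhdsWithin_le_nhds).mul hquad
    |>.div (hderiv.mono_left nhdsWithin_le_nhds) hder
  have hlimit : deriv f x₀ / deriv f x₀ * (deriv (deriv f) x₀ / 2) / deriv f x₀ =
      iteratedDeriv 2 f x₀ / (2 * deriv f x₀) := by
    rw [iteratedDeriv_succ, iteratedDeriv_one]
    field_simp
  refine hlimit ▸ hlim.congr' ?_
  filter_upwards [self_mem_nhdsWithin, nhdsWithin_le_nhds (hderiv.eventually_ne hder)]
    with x hx hx'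
  exact (newton_quotient_eq_dslope_div_mul hroot hx hx').symm

theorem stmt12 (D : Set ℝ) (hD : IsOpen D) (hDconn : D.OrdConnected)
    (f : ℝ → ℝ) (hf : ContDiffOn ℝ 3 f D)
    (x₀ : ℝ) (hx₀ : x₀ ∈ D) (hroot : f x₀ = 0) (hder : deriv f x₀ ≠ 0) :
    Filter.Tendsto
      (fun x : ℝ => (f (x - f x / deriv f x) / f x) / (x - x₀))
      (nhdsWithin x₀ {x₀}ᶜ)
      (nhds (iteratedDeriv 2 f x₀ / (2 * deriv f x₀))) :=
  stmt12_general D hD f hf x₀ hx₀ hroot hder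
end

section
/- Let f : ℝ → ℝ be three times continuously differentiable on an open interval D and let x* ∈ D be a simple zero of f. Define, for x near x*, y = x - f(x)/f'(x) and z = x - f(x)²/((f(x) - f(y))·f'(x)). Then there exist C > 0 and a neighborhood U of x* such that |z - x*| ≤ C·|x - x*|³ for all x ∈ U where z is defined (i.e., f'(x) ≠ 0 and f(x) ≠ f(y)). -/
open Filter Topology Asymptotics Set

/-!
Write `e = x - x₀`, `y` for the Newton step and `z` for the Newton–Secant step. Newton's method
converges quadratically: `y - x₀ = O(e²)`. Algebraically,
`z - x₀ = ((y - x₀) f x - e f y) / (f x - f y)`. Inserting the second-order Taylor expansion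
`f t = a (t - x₀) + b (t - x₀)² + O((t - x₀)³)`, the linear terms cancel in the numerator and the
quadratic ones leave `b e (y - x₀) (x - y) = O(e⁴)`. Since `f` is strictly differentiable at the
simple zero, the denominator `f x - f y` is comparable to `x - y`, hence to `e`.
-/

section Taylor

variable {E : Type*} [NormedAddCommGroup E] [NormedSpace ℝ E] {f f' f'' : ℝ → E} {x₀ : ℝ}

theorem isBigO_sub_pow_succ_of_hasDerivAt {n : ℕ}
    (hf : ∀ᶠ x in 𝓝 x₀, HasDerivAt f (f' x) x) (hf' : f' =O[𝓝 x₀] fun x ↦ (x - x₀) ^ n) :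
    (fun x ↦ f x - f x₀) =O[𝓝 x₀] fun x ↦ (x - x₀) ^ (n + 1) := by
  obtain ⟨c, hc, hcf'⟩ := hf'.exists_pos
  obtain ⟨ε, hε, hball⟩ := Metric.eventually_nhds_iff_ball.1 (hf.and hcf'.bound)
  refine IsBigO.of_bound c ?_
  filter_upwards [Metric.ball_mem_nhds x₀ hε] with x hx
  have hseg : uIcc x₀ x ⊆ Metric.ball x₀ ε :=
    (convex_ball x₀ ε).ordConnected.uIcc_subset (Metric.mem_ball_self hε) hx
  have hmvt := (convex_uIcc x₀ x).norm_image_sub_le_of_norm_hasDerivWithin_le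
    (C := c * |x - x₀| ^ n)
    (fun y hy ↦ (hball y (hseg hy)).1.hasDerivWithinAt)
    (fun y hy ↦ (hball y (hseg hy)).2.trans <| by
      rw [norm_pow, Real.norm_eq_abs]
      gcongr ?_ * ?_ ^ n
      exact abs_sub_left_of_mem_uIcc hy)
    left_mem_uIcc right_mem_uIcc
  rwa [norm_pow, pow_succ, ← mul_assoc]

theorem taylor_one_isBigO_sq (hf : ∀ᶠ x in 𝓝 x₀, HasDerivAt f (f' x) x)
    (hf' : DifferentiableAt ℝ f' x₀) :
    (fun x ↦ f x - f x₀ - (x - x₀) • f' x₀) =O[𝓝 x₀] fun x ↦ (x - x₀) ^ 2 := by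
  have hderiv : ∀ᶠ x in 𝓝 x₀,
      HasDerivAt (fun x ↦ f x - (x - x₀) • f' x₀) (f' x - f' x₀) x := by
    filter_upwards [hf] with x hx
    exact (hx.fun_sub (((hasDerivAt_id' x).sub_const x₀).smul_const (f' x₀))).congr_deriv
      (by simp)
  have h := isBigO_sub_pow_succ_of_hasDerivAt hderiv (n := 1)
    (by simpa using hf'.hasDerivAt.isBigO_sub)
  refine h.congr_left fun x ↦ ?_
  simp only [sub_self, zero_smul, sub_zero]
  abel

theorem taylor_two_isBigO_cube (hf : ∀ᶠ x in 𝓝 x₀, HasDerivAt f (f' x) x)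
    (hf' : ∀ᶠ x in 𝓝 x₀, HasDerivAt f' (f'' x) x) (hf'' : DifferentiableAt ℝ f'' x₀) :
    (fun x ↦ f x - f x₀ - (x - x₀) • f' x₀ - ((x - x₀) ^ 2 / 2) • f'' x₀) =O[𝓝 x₀]
      fun x ↦ (x - x₀) ^ 3 := by
  have hderiv : ∀ᶠ x in 𝓝 x₀, HasDerivAt
      (fun x ↦ f x - (x - x₀) • f' x₀ - ((x - x₀) ^ 2 / 2) • f'' x₀)
      (f' x - f' x₀ - (x - x₀) • f'' x₀) x := by
    filter_upwards [hf] with x hx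
    have hlin := ((hasDerivAt_id' x).sub_const x₀).smul_const (f' x₀)
    have hsq := ((((hasDerivAt_id' x).sub_const x₀).pow 2).div_const 2).smul_const (f'' x₀)
    exact ((hx.fun_sub hlin).fun_sub hsq).congr_deriv (by simp)
  have h := isBigO_sub_pow_succ_of_hasDerivAt hderiv (taylor_one_isBigO_sq hf' hf'')
  refine h.congr_left fun x ↦ ?_
  simp only [sub_self, zero_smul, sub_zero, ne_eq, OfNat.ofNat_ne_zero, not_false_eq_true,
    zero_pow, zero_div]
  abel

end Taylor

theorem isBigO_sub_pow_of_le {𝕜 : Type*} [NormedField 𝕜] (x₀ : 𝕜) {m n : ℕ} (h : m ≤ n) :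
    (fun x ↦ (x - x₀) ^ n) =O[𝓝 x₀] fun x ↦ (x - x₀) ^ m := by
  obtain rfl | hlt := h.eq_or_lt
  · exact isBigO_refl _ _
  · exact (isLittleO_pow_pow hlt).isBigO.comp_tendsto (tendsto_sub_nhds_zero_iff.2 tendsto_id)

noncomputable def newtonStep (f f' : ℝ → ℝ) (x : ℝ) : ℝ := x - f x / f' x

noncomputable def newtonSecantStep (f f' : ℝ → ℝ) (x : ℝ) : ℝ :=
  x - f x ^ 2 / ((f x - f (newtonStep f f' x)) * f' x)

theorem newtonSecantStep_sub_eq {f f' : ℝ → ℝ} {x x₀ : ℝ} (hx : f' x ≠ 0)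
    (hxy : f x ≠ f (newtonStep f f' x)) :
    newtonSecantStep f f' x - x₀ =
      ((newtonStep f f' x - x₀) * f x - (x - x₀) * f (newtonStep f f' x)) /
        (f x - f (newtonStep f f' x)) := by
  have hfx : f x = (x - newtonStep f f' x) * f' x := by
    simp only [newtonStep]
    field_simp
    ring
  rw [eq_div_iff (sub_ne_zero.2 hxy), newtonSecantStep]
  generalize newtonStep f f' x = y at hxy hfx ⊢
  have hquot : f x ^ 2 / ((f x - f y) * f' x) = f x * (x - y) / (f x - f y) := by
    rw [div_eq_div_iff (mul_ne_zero (sub_ne_zero.2 hxy) hx) (sub_ne_zero.2 hxy), hfx]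
    ring
  rw [hquot]
  field_simp [sub_ne_zero.2 hxy]
  ring

section Convergence

variable {f f' f'' Y : ℝ → ℝ} {x₀ : ℝ}

theorem newtonStep_sub_isBigO (hf : ∀ᶠ x in 𝓝 x₀, HasDerivAt f (f' x) x)
    (hf' : DifferentiableAt ℝ f' x₀) (hroot : f x₀ = 0) (hder : f' x₀ ≠ 0) :
    (fun x ↦ newtonStep f f' x - x₀) =O[𝓝 x₀] fun x ↦ (x - x₀) ^ 2 := by
  have hnum : (fun x ↦ (f' x - f' x₀) * (x - x₀) - (f x - f x₀ - (x - x₀) • f' x₀))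
      =O[𝓝 x₀] fun x ↦ (x - x₀) ^ 2 :=
    ((hf'.hasDerivAt.isBigO_sub.mul (isBigO_refl _ _)).congr_right fun x ↦ (sq _).symm).sub
      (taylor_one_isBigO_sq hf hf')
  have hinv : (fun x ↦ (f' x)⁻¹) =O[𝓝 x₀] fun _ ↦ (1 : ℝ) :=
    (hf'.continuousAt.inv₀ hder).tendsto.isBigO_one ℝ
  refine (hnum.mul hinv).congr' ?_ (by simp)
  filter_upwards [hf'.continuousAt.eventually_ne hder] with x hx
  simp only [newtonStep, hroot, smul_eq_mul]
  field_simp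
  ring

theorem secant_numerator_isBigO {a b : ℝ}
    (hf : (fun x ↦ f x - a * (x - x₀) - b * (x - x₀) ^ 2) =O[𝓝 x₀] fun x ↦ (x - x₀) ^ 3)
    (hY : (fun x ↦ Y x - x₀) =O[𝓝 x₀] fun x ↦ (x - x₀) ^ 2) :
    (fun x ↦ (Y x - x₀) * f x - (x - x₀) * f (Y x)) =O[𝓝 x₀] fun x ↦ (x - x₀) ^ 4 := by
  have hYlim : Tendsto Y (𝓝 x₀) (𝓝 x₀) := tendsto_sub_nhds_zero_iff.1 <|
    hY.trans_tendsto (((continuous_sub_right x₀).pow 2).tendsto' x₀ 0 (by simp))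
  have hRY : (fun x ↦ f (Y x) - a * (Y x - x₀) - b * (Y x - x₀) ^ 2)
      =O[𝓝 x₀] fun x ↦ (x - x₀) ^ 6 :=
    (hf.comp_tendsto hYlim).trans ((hY.pow 3).congr_right fun x ↦ by ring)
  have hgap : (fun x ↦ (x - x₀) - (Y x - x₀)) =O[𝓝 x₀] fun x ↦ (x - x₀) ^ 1 :=
    ((isBigO_refl _ _).congr_right fun x ↦ (pow_one _).symm).sub
      (hY.trans (isBigO_sub_pow_of_le x₀ (by norm_num)))
  have h₁ := ((((isBigO_refl (fun x ↦ (x - x₀) ^ 1) _).mul hY).mul hgap).const_mul_left b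
    |>.congr_right fun x ↦ by ring : _ =O[𝓝 x₀] fun x ↦ (x - x₀) ^ 4)
  have h₂ := ((hY.mul hf).congr_right fun x ↦ (pow_add _ 2 3).symm).trans
    (isBigO_sub_pow_of_le x₀ (m := 4) (by norm_num))
  have h₃ := (((isBigO_refl (fun x ↦ (x - x₀) ^ 1) _).mul hRY).congr_right
    fun x ↦ (pow_add _ 1 6).symm).trans (isBigO_sub_pow_of_le x₀ (m := 4) (by norm_num))
  exact ((h₁.add h₂).sub h₃).congr_left fun x ↦ by ring

theorem sub_isBigO_image_sub_image {a : ℝ} (hf : HasStrictDerivAt f a x₀) (ha : a ≠ 0)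
    (hY : (fun x ↦ Y x - x₀) =o[𝓝 x₀] fun x ↦ x - x₀) :
    (fun x ↦ x - x₀) =O[𝓝 x₀] fun x ↦ f x - f (Y x) := by
  have hYlim : Tendsto Y (𝓝 x₀) (𝓝 x₀) := tendsto_sub_nhds_zero_iff.1 <|
    hY.isBigO.trans_tendsto (tendsto_sub_nhds_zero_iff.2 tendsto_id)
  have hsecant : (fun x ↦ x - Y x) =O[𝓝 x₀] fun x ↦ f x - f (Y x) :=
    (HasDerivAtFilter.isTheta_sub hf ha).isBigO_symm.comp_tendsto
      (tendsto_id.prodMk_nhds hYlim)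
  exact (hY.right_isBigO_sub.congr_right fun x ↦ by ring).trans hsecant

theorem newtonSecantStep_sub_isBigO (hf : ∀ᶠ x in 𝓝 x₀, HasDerivAt f (f' x) x)
    (hf' : ∀ᶠ x in 𝓝 x₀, HasDerivAt f' (f'' x) x) (hf'' : DifferentiableAt ℝ f'' x₀)
    (hroot : f x₀ = 0) (hder : f' x₀ ≠ 0) :
    (fun x ↦ newtonSecantStep f f' x - x₀) =O[𝓝 x₀] fun x ↦ (x - x₀) ^ 3 := by
  have hf'x₀ : DifferentiableAt ℝ f' x₀ := hf'.self_of_nhds.differentiableAt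
  have hY := newtonStep_sub_isBigO hf hf'x₀ hroot hder
  have hnum := secant_numerator_isBigO (a := f' x₀) (b := f'' x₀ / 2)
    ((taylor_two_isBigO_cube hf hf' hf'').congr_left fun x ↦ by
      simp only [hroot, smul_eq_mul]
      ring) hY
  have hden := sub_isBigO_image_sub_image
    (hasStrictDerivAt_of_hasDerivAt_of_continuousAt hf hf'x₀.continuousAt) hder
    (hY.trans_isLittleO (by simpa using isLittleO_pow_sub_sub x₀ one_lt_two))
  have hinv := hden.inv_rev <| .of_forall fun x hx ↦ by
    simp [sub_eq_zero.1 hx, newtonStep, hroot]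
  refine (hnum.mul hinv).congr' ?_ (.of_forall fun x ↦ ?_)
  · filter_upwards [hf'x₀.continuousAt.eventually_ne hder, hden.eq_zero_imp] with x hx hxy
    -- Where `f x = f y` the quotient is the junk value `0`; by `hden` this only happens at `x₀`.
    by_cases h : f x = f (newtonStep f f' x)
    · obtain rfl : x = x₀ := sub_eq_zero.1 (hxy (sub_eq_zero.2 h))
      simp [newtonSecantStep, newtonStep, hroot]
    · rw [newtonSecantStep_sub_eq hx h, div_eq_mul_inv]
  · rcases eq_or_ne (x - x₀) 0 with h | h
    · simp [h]
    · field_simp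

end Convergence

theorem stmt13_general (D : Set ℝ) (hD : IsOpen D)
    (f : ℝ → ℝ) (hf : ContDiffOn ℝ 3 f D)
    (x₀ : ℝ) (hx₀ : x₀ ∈ D) (hroot : f x₀ = 0) (hder : deriv f x₀ ≠ 0) :
    ∃ C > 0, ∃ U ∈ nhds x₀, ∀ x ∈ U,
      deriv f x ≠ 0 → f x ≠ f (x - f x / deriv f x) →
      |(x - (f x)^2 / ((f x - f (x - f x / deriv f x)) * deriv f x)) - x₀|
        ≤ C * |x - x₀|^3 := by
  have hDx₀ : D ∈ 𝓝 x₀ := hD.mem_nhds hx₀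
  have hf' : ContDiffOn ℝ 2 (deriv f) D := hf.deriv_of_isOpen hD (by norm_num)
  have hf'' : ContDiffOn ℝ 1 (deriv (deriv f)) D := hf'.deriv_of_isOpen hD (by norm_num)
  obtain ⟨C, hC, hbound⟩ := (newtonSecantStep_sub_isBigO
    (((hf.differentiableOn three_ne_zero).eventually_differentiableAt hDx₀).mono
      fun _ h ↦ h.hasDerivAt)
    (((hf'.differentiableOn two_ne_zero).eventually_differentiableAt hDx₀).mono
      fun _ h ↦ h.hasDerivAt)
    ((hf''.differentiableOn one_ne_zero).differentiableAt hDx₀) hroot hder).exists_pos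
  refine ⟨C, hC, _, hbound.bound, fun x (hx : ‖_‖ ≤ C * ‖_‖) _ _ ↦ ?_⟩
  rwa [Real.norm_eq_abs, Real.norm_eq_abs, abs_pow] at hx

theorem stmt13 (D : Set ℝ) (hD : IsOpen D) (hDconn : D.OrdConnected)
    (f : ℝ → ℝ) (hf : ContDiffOn ℝ 3 f D)
    (x₀ : ℝ) (hx₀ : x₀ ∈ D) (hroot : f x₀ = 0) (hder : deriv f x₀ ≠ 0) :
    ∃ C > 0, ∃ U ∈ nhds x₀, ∀ x ∈ U,
      deriv f x ≠ 0 → f x ≠ f (x - f x / deriv f x) →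
      |(x - (f x)^2 / ((f x - f (x - f x / deriv f x)) * deriv f x)) - x₀|
        ≤ C * |x - x₀|^3 :=
  stmt13_general D hD f hf x₀ hx₀ hroot hder
end

section
/- Let f : ℝ → ℝ be twice continuously differentiable on an open interval D and let x* ∈ D be a simple zero of f. Define c₂ = f''(x*)/(2 f'(x*)). For x near x* with y = x - f(x)/f'(x), the quantity f(y)·(f'(x))²/f(x)² converges to f''(x*)/2 as x → x* (x ≠ x*). -/
/-!
Write `s = dslope f x*`, so that `f y = (y - x*) s(y)` with `s` continuous at `x*` and
`s(x*) = f'(x*)`. For the Newton iterate `y = x - f(x)/f'(x)` one has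
`y - x* = (f'(x)(x - x*) - f(x)) / f'(x)`, hence
`f(y) f'(x)² / f(x)² = s(y) f'(x) / s(x)² · (f'(x)(x - x*) - f(x)) / (x - x*)²`.
As `x → x*` also `y → x*`, so the first factor tends to `1`, and by L'Hôpital the Taylor
remainder quotient tends to `f''(x*)/2`.
-/

open Filter Topology

variable {f f' f'' : ℝ → ℝ} {a : ℝ}

theorem tendsto_taylor_remainder_div_sq
    (hf : ∀ᶠ x in 𝓝 a, HasDerivAt f (f' x) x) (hf' : ∀ᶠ x in 𝓝 a, HasDerivAt f' (f'' x) x)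
    (hf'' : ContinuousAt f'' a) :
    Tendsto (fun x => (f' x * (x - a) - (f x - f a)) / (x - a) ^ 2) (𝓝[≠] a)
      (𝓝 (f'' a / 2)) := by
  have hfa : ContinuousAt f a := hf.self_of_nhds.continuousAt
  have hf'a : ContinuousAt f' a := hf'.self_of_nhds.continuousAt
  refine HasDerivAt.lhopital_zero_nhdsNE (f' := fun x => f'' x * (x - a))
    (g' := fun x => 2 * (x - a)) ?_ ?_ ?_ ?_ ?_ ?_
  · filter_upwards [nhdsWithin_le_nhds hf, nhdsWithin_le_nhds hf'] with x hfx hf'x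
    exact ((hf'x.fun_mul ((hasDerivAt_id' x).sub_const a)).fun_sub
      (hfx.sub_const (f a))).congr_deriv (by ring)
  · filter_upwards with x
    simpa using ((hasDerivAt_id' x).sub_const a).fun_pow 2
  · filter_upwards [self_mem_nhdsWithin] with x hx
    exact mul_ne_zero two_ne_zero (sub_ne_zero.mpr hx)
  · have h : ContinuousAt (fun x => f' x * (x - a) - (f x - f a)) a := by fun_prop
    simpa using h.tendsto.mono_left nhdsWithin_le_nhds
  · have h : ContinuousAt (fun x => (x - a) ^ 2) a := by fun_prop
    simpa using h.tendsto.mono_left nhdsWithin_le_nhds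
  · refine ((hf''.tendsto.div_const 2).mono_left nhdsWithin_le_nhds).congr' ?_
    filter_upwards [self_mem_nhdsWithin] with x hx
    field_simp [sub_ne_zero.mpr hx]

-- Unconditional: wherever `f' x`, `x - a` or `s x` vanishes, both sides are `0` since `x / 0 = 0`.
theorem newton_step_mul_sq_div_sq_eq {s : ℝ → ℝ} (hfs : ∀ y, f y = (y - a) * s y) (x : ℝ) :
    f (x - f x / f' x) * f' x ^ 2 / f x ^ 2 =
      s (x - f x / f' x) * ((f' x * (x - a) - f x) / (x - a) ^ 2 * f' x) / s x ^ 2 := by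
  rcases eq_or_ne (f' x) 0 with hf'x | hf'x
  · simp [hf'x]
  have hy : x - f x / f' x - a = (f' x * (x - a) - f x) / f' x := by
    field_simp
    ring
  rw [hfs (x - f x / f' x), hy]
  generalize s (x - f x / f' x) = t
  rw [hfs x]
  rcases eq_or_ne (s x) 0 with hsx | hsx
  · simp [hsx]
  · field_simp

theorem tendsto_newton_step_mul_sq_div_sq
    (hf : ∀ᶠ x in 𝓝 a, HasDerivAt f (f' x) x) (hf' : ∀ᶠ x in 𝓝 a, HasDerivAt f' (f'' x) x)
    (hf'' : ContinuousAt f'' a) (hroot : f a = 0) (hder : f' a ≠ 0) :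
    Tendsto (fun x => f (x - f x / f' x) * f' x ^ 2 / f x ^ 2) (𝓝[≠] a) (𝓝 (f'' a / 2)) := by
  have hfa : HasDerivAt f (f' a) a := hf.self_of_nhds
  have hf'a : ContinuousAt f' a := hf'.self_of_nhds.continuousAt
  have hs : Tendsto (dslope f a) (𝓝 a) (𝓝 (f' a)) := by
    rw [← hfa.deriv, ← dslope_same]
    exact (continuousAt_dslope_same.mpr hfa.differentiableAt).tendsto
  have hfs : ∀ y, f y = (y - a) * dslope f a y := fun y => by
    simpa [hroot] using (sub_smul_dslope f a y).symm
  have hnewton : Tendsto (fun x => x - f x / f' x) (𝓝[≠] a) (𝓝 a) := by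
    have h : ContinuousAt (fun x => x - f x / f' x) a := by
      have := hfa.continuousAt
      fun_prop (disch := exact hder)
    simpa [hroot] using h.tendsto.mono_left nhdsWithin_le_nhds
  have hremainder := tendsto_taylor_remainder_div_sq hf hf' hf''
  simp only [hroot, sub_zero] at hremainder
  have hlim := ((hs.comp hnewton).mul (hremainder.mul
    (hf'a.tendsto.mono_left nhdsWithin_le_nhds))).div
    ((hs.mono_left nhdsWithin_le_nhds).pow 2) (pow_ne_zero 2 hder)
  rw [show f' a * (f'' a / 2 * f' a) / f' a ^ 2 = f'' a / 2 by field_simp] at hlim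
  exact hlim.congr fun x => (newton_step_mul_sq_div_sq_eq hfs x).symm

theorem stmt16_general (D : Set ℝ) (hD : IsOpen D)
    (f : ℝ → ℝ) (hf : ContDiffOn ℝ 2 f D)
    (x₀ : ℝ) (hx₀ : x₀ ∈ D) (hroot : f x₀ = 0) (hder : deriv f x₀ ≠ 0) :
    Filter.Tendsto
      (fun x : ℝ => f (x - f x / deriv f x) * (deriv f x)^2 / (f x)^2)
      (nhdsWithin x₀ {x₀}ᶜ)
      (nhds (iteratedDeriv 2 f x₀ / 2)) := by
  have hD₀ : D ∈ 𝓝 x₀ := hD.mem_nhds hx₀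
  have hf' : ContDiffOn ℝ 1 (deriv f) D := hf.deriv_of_isOpen hD (by norm_num)
  rw [iteratedDeriv_succ, iteratedDeriv_one]
  refine tendsto_newton_step_mul_sq_div_sq ?_ ?_
    ((hf'.continuousOn_deriv_of_isOpen hD le_rfl).continuousAt hD₀) hroot hder
  · filter_upwards [hD₀] with x hx
    exact ((hf.contDiffAt (hD.mem_nhds hx)).differentiableAt two_ne_zero).hasDerivAt
  · filter_upwards [hD₀] with x hx
    exact ((hf'.contDiffAt (hD.mem_nhds hx)).differentiableAt one_ne_zero).hasDerivAt

theorem stmt16 (D : Set ℝ) (hD : IsOpen D) (hDconn : D.OrdConnected)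
    (f : ℝ → ℝ) (hf : ContDiffOn ℝ 2 f D)
    (x₀ : ℝ) (hx₀ : x₀ ∈ D) (hroot : f x₀ = 0) (hder : deriv f x₀ ≠ 0) :
    Filter.Tendsto
      (fun x : ℝ => f (x - f x / deriv f x) * (deriv f x)^2 / (f x)^2)
      (nhdsWithin x₀ {x₀}ᶜ)
      (nhds (iteratedDeriv 2 f x₀ / 2)) :=
  stmt16_general D hD f hf x₀ hx₀ hroot hder
end
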